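/- Let C ⊆ ℝⁿ be a nonempty closed convex set, let f : ℝⁿ → ℝ be differentiable and convex with ∇f L-Lipschitz on C (L > 0), and suppose f attains its minimum over C at x*. Then for every x ∈ C and every η > 0, the gradient mapping satisfies ‖G_η(x)‖² ≤ 2·max{η, L}·(f(x) − f(x*)). -/

import Mathlib

open Set
open scoped RealInnerProductSpace

/-!
Put `m := max η L`. Since `m ≥ L`, the descent lemma combined with the projection inequality
at `x` gives `‖G_m x‖² ≤ 2m (f x - f (P_C (x - ∇f(x)/m))) ≤ 2m (f x - f xs)`. Moreover
`‖G_η x‖ ≤ ‖G_m x‖` for `η ≤ m`: adding the projection inequalities at the two projected points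
`p_η`, `p_m` yields `⟪G_η x - G_m x, (x - p_η) - (x - p_m)⟫ ≤ 0`, and this forces
`η ‖x - p_η‖ ≤ m ‖x - p_m‖`.
-/

section

variable {E : Type*} [NormedAddCommGroup E] [InnerProductSpace ℝ E]

theorem Convex.inner_sub_le_zero_of_forall_norm_sub_le {C : Set E} (hC : Convex ℝ C)
    {u p : E} (hp : p ∈ C) (hmin : ∀ w ∈ C, ‖u - p‖ ≤ ‖u - w‖) :
    ∀ w ∈ C, ⟪u - p, w - p⟫ ≤ 0 := by
  have : Nonempty C := ⟨⟨p, hp⟩⟩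
  refine (norm_eq_iInf_iff_real_inner_le_zero hC hp).1 (le_antisymm ?_ ?_)
  · exact le_ciInf fun w => hmin w w.2
  · exact ciInf_le ⟨0, by rintro _ ⟨w, rfl⟩; positivity⟩ (⟨p, hp⟩ : C)

theorem mul_norm_le_mul_norm_of_inner_smul_sub_smul_nonpos {a b : E} {η m : ℝ} (hη : 0 ≤ η)
    (hηm : η ≤ m) (h : ⟪η • a - m • b, a - b⟫ ≤ 0) : η * ‖a‖ ≤ m * ‖b‖ := by
  have hcs : ⟪a, b⟫ ≤ ‖a‖ * ‖b‖ := real_inner_le_norm a b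
  have hprod : (η * ‖a‖ - m * ‖b‖) * (‖a‖ - ‖b‖) ≤ 0 := by
    simp only [inner_sub_left, inner_sub_right, real_inner_smul_left, real_inner_comm a b,
      real_inner_self_eq_norm_sq] at h
    nlinarith
  by_contra! hlt
  have hab : ‖a‖ ≤ ‖b‖ := by nlinarith
  nlinarith [norm_nonneg b]

noncomputable def gradientMapping (proj g : E → E) (η : ℝ) (x : E) : E :=
  η • (x - proj (x - (1 / η) • g x))

section Projection

variable {C : Set E} {proj : E → E} (hproj : ∀ u, ∀ w ∈ C, ⟪u - proj u, w - proj u⟫ ≤ 0)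
include hproj

theorem inner_gradientMapping_sub_nonpos (g : E → E) (x : E) {η : ℝ} (hη : 0 < η) {w : E}
    (hw : w ∈ C) : ⟪gradientMapping proj g η x - g x, w - proj (x - (1 / η) • g x)⟫ ≤ 0 := by
  have hG : gradientMapping proj g η x - g x
      = η • (x - (1 / η) • g x - proj (x - (1 / η) • g x)) := by
    simp only [gradientMapping, smul_sub, smul_smul, mul_one_div_cancel hη.ne', one_smul]
    abel
  rw [hG, real_inner_smul_left]
  exact mul_nonpos_of_nonneg_of_nonpos hη.le (hproj _ w hw)

variable (hproj_mem : ∀ u, proj u ∈ C)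
include hproj_mem

theorem norm_gradientMapping_le_of_le (g : E → E) (x : E) {η m : ℝ} (hη : 0 < η) (hηm : η ≤ m) :
    ‖gradientMapping proj g η x‖ ≤ ‖gradientMapping proj g m x‖ := by
  set p := proj (x - (1 / η) • g x)
  set q := proj (x - (1 / m) • g x)
  have hp := inner_gradientMapping_sub_nonpos hproj g x hη (hproj_mem (x - (1 / m) • g x))
  have hq := inner_gradientMapping_sub_nonpos hproj g x (hη.trans_le hηm)
    (hproj_mem (x - (1 / η) • g x))
  have hmono : ⟪η • (x - p) - m • (x - q), (x - p) - (x - q)⟫ ≤ 0 := by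
    have hsum : ⟪η • (x - p) - m • (x - q), (x - p) - (x - q)⟫
        = ⟪gradientMapping proj g η x - g x, q - p⟫
          - ⟪gradientMapping proj g m x - g x, q - p⟫ := by
      rw [← inner_sub_left, sub_sub_sub_cancel_right, sub_sub_sub_cancel_left]
      rfl
    rw [← neg_sub q p, inner_neg_right] at hq
    linarith
  simp only [gradientMapping, norm_smul, Real.norm_of_nonneg hη.le,
    Real.norm_of_nonneg (hη.le.trans hηm)]
  exact mul_norm_le_mul_norm_of_inner_smul_sub_smul_nonpos hη.le hηm hmono

end Projection

variable [CompleteSpace E]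

theorem HasGradientAt.hasDerivAt_comp_add_smul {f : E → ℝ} {g x d : E} {t : ℝ}
    (hf : HasGradientAt f g (x + t • d)) :
    HasDerivAt (fun s : ℝ => f (x + s • d)) ⟪g, d⟫ t := by
  have hline : HasDerivAt (fun s : ℝ => x + s • d) d t := by
    simpa using ((hasDerivAt_id t).smul_const d).const_add x
  simpa [InnerProductSpace.toDual_apply_apply, Function.comp_def] using
    hf.hasFDerivAt.comp_hasDerivAt t hline

theorem Convex.le_add_inner_add_sq_of_lipschitz_gradient {C : Set E} (hC : Convex ℝ C) {f : E → ℝ}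
    {f' : E → E} (hgrad : ∀ z ∈ C, HasGradientAt f (f' z) z) {L : ℝ}
    (hlip : ∀ u ∈ C, ∀ v ∈ C, ‖f' u - f' v‖ ≤ L * ‖u - v‖) {x y : E} (hx : x ∈ C) (hy : y ∈ C) :
    f y ≤ f x + ⟪f' x, y - x⟫ + L / 2 * ‖y - x‖ ^ 2 := by
  set d := y - x
  have hseg : ∀ t ∈ Icc (0 : ℝ) 1, x + t • d ∈ C := fun t ht => hC.add_smul_sub_mem hx hy ht
  set ψ : ℝ → ℝ := fun t => t * ⟪f' x, d⟫ + L / 2 * t ^ 2 * ‖d‖ ^ 2 - f (x + t • d)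
  have hψ : ∀ t ∈ Icc (0 : ℝ) 1,
      HasDerivAt ψ (⟪f' x, d⟫ + L * t * ‖d‖ ^ 2 - ⟪f' (x + t • d), d⟫) t := by
    intro t ht
    have hquad : HasDerivAt (fun t : ℝ => L / 2 * t ^ 2 * ‖d‖ ^ 2) (L * t * ‖d‖ ^ 2) t :=
      (((hasDerivAt_pow 2 t).const_mul (L / 2)).mul_const (‖d‖ ^ 2)).congr_deriv (by ring)
    exact ((hasDerivAt_mul_const ⟪f' x, d⟫).add hquad).sub
      (hgrad _ (hseg t ht)).hasDerivAt_comp_add_smul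
  have hmono : MonotoneOn ψ (Icc 0 1) := by
    refine monotoneOn_of_hasDerivWithinAt_nonneg (convex_Icc 0 1)
      (fun t ht => (hψ t ht).continuousAt.continuousWithinAt)
      (fun t ht => (hψ t (interior_subset ht)).hasDerivWithinAt) fun t ht => ?_
    have ht := interior_subset ht
    have hcs : ⟪f' (x + t • d) - f' x, d⟫ ≤ L * t * ‖d‖ ^ 2 := calc
      _ ≤ ‖f' (x + t • d) - f' x‖ * ‖d‖ := real_inner_le_norm _ _
      _ ≤ L * ‖x + t • d - x‖ * ‖d‖ := by gcongr; exact hlip _ (hseg t ht) _ hx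
      _ = L * t * ‖d‖ ^ 2 := by
        rw [add_sub_cancel_left, norm_smul, Real.norm_of_nonneg ht.1]; ring
    rw [inner_sub_left] at hcs
    linarith
  have h01 := hmono (left_mem_Icc.2 zero_le_one) (right_mem_Icc.2 zero_le_one) zero_le_one
  simp [ψ, d] at h01
  linarith

theorem sq_norm_gradientMapping_le {C : Set E} (hC : Convex ℝ C) {proj : E → E}
    (hproj : ∀ u, ∀ w ∈ C, ⟪u - proj u, w - proj u⟫ ≤ 0) (hproj_mem : ∀ u, proj u ∈ C)
    {f : E → ℝ} {f' : E → E} (hgrad : ∀ z ∈ C, HasGradientAt f (f' z) z) {L : ℝ}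
    (hlip : ∀ u ∈ C, ∀ v ∈ C, ‖f' u - f' v‖ ≤ L * ‖u - v‖) {x : E} (hx : x ∈ C) {m : ℝ}
    (hm : 0 < m) (hLm : L ≤ m) :
    ‖gradientMapping proj f' m x‖ ^ 2 ≤ 2 * m * (f x - f (proj (x - (1 / m) • f' x))) := by
  set q := proj (x - (1 / m) • f' x)
  have hG : gradientMapping proj f' m x = m • (x - q) := rfl
  have hstep : m * ‖x - q‖ ^ 2 ≤ ⟪f' x, x - q⟫ := by
    have := inner_gradientMapping_sub_nonpos hproj f' x hm hx
    rw [hG, inner_sub_left, real_inner_smul_left, real_inner_self_eq_norm_sq] at this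
    linarith
  have hdescent :=
    hC.le_add_inner_add_sq_of_lipschitz_gradient hgrad hlip hx (hproj_mem (x - (1 / m) • f' x))
  rw [← neg_sub x q, inner_neg_right, norm_neg] at hdescent
  have hgap : m / 2 * ‖x - q‖ ^ 2 ≤ f x - f q := by
    nlinarith [mul_le_mul_of_nonneg_right hLm (sq_nonneg ‖x - q‖)]
  calc ‖gradientMapping proj f' m x‖ ^ 2 = 2 * m * (m / 2 * ‖x - q‖ ^ 2) := by
        rw [hG, norm_smul, Real.norm_of_nonneg hm.le]; ring
    _ ≤ 2 * m * (f x - f q) := by gcongr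

end

theorem gradient_mapping_sq_le_primal_gap_general
    {n : ℕ} (C : Set (EuclideanSpace ℝ (Fin n)))
    (hCconvex : Convex ℝ C)
    (proj : EuclideanSpace ℝ (Fin n) → EuclideanSpace ℝ (Fin n))
    (hproj_mem : ∀ u, proj u ∈ C)
    (hproj_min : ∀ u, ∀ w ∈ C, ‖u - proj u‖ ≤ ‖u - w‖)
    (f : EuclideanSpace ℝ (Fin n) → ℝ) (f' : EuclideanSpace ℝ (Fin n) → EuclideanSpace ℝ (Fin n))
    (hgrad : ∀ x, HasGradientAt f (f' x) x)
    (L : ℝ)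
    (hlip : ∀ x ∈ C, ∀ y ∈ C, ‖f' x - f' y‖ ≤ L * ‖x - y‖)
    (xs : EuclideanSpace ℝ (Fin n)) (hxsmin : ∀ u ∈ C, f xs ≤ f u)
    (x : EuclideanSpace ℝ (Fin n)) (hxC : x ∈ C) (η : ℝ) (hη : 0 < η) :
    ‖η • (x - proj (x - (1 / η) • f' x))‖ ^ 2 ≤ 2 * max η L * (f x - f xs) := by
  have hproj : ∀ u, ∀ w ∈ C, ⟪u - proj u, w - proj u⟫ ≤ 0 := fun u =>
    hCconvex.inner_sub_le_zero_of_forall_norm_sub_le (hproj_mem u) (hproj_min u)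
  have hm : 0 < max η L := lt_max_of_lt_left hη
  calc ‖gradientMapping proj f' η x‖ ^ 2 ≤ ‖gradientMapping proj f' (max η L) x‖ ^ 2 := by
        gcongr
        exact norm_gradientMapping_le_of_le hproj hproj_mem f' x hη (le_max_left η L)
    _ ≤ 2 * max η L * (f x - f (proj (x - (1 / max η L) • f' x))) :=
        sq_norm_gradientMapping_le hCconvex hproj hproj_mem (fun z _ => hgrad z) hlip hxC hm
          (le_max_right η L)
    _ ≤ 2 * max η L * (f x - f xs) := by
        gcongr
        exact hxsmin _ (hproj_mem _)

/-- For `f` convex and differentiable with `L`-Lipschitz gradient on a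
nonempty closed convex set `C`, attaining its minimum over `C` at `xs`, the gradient
mapping `G_η(x) = η(x - P_C(x - (1/η)∇f(x)))` satisfies
`‖G_η(x)‖² ≤ 2·max{η, L}·(f x - f xs)` for every `x ∈ C` and `η > 0`. -/
theorem gradient_mapping_sq_le_primal_gap
    {n : ℕ} (C : Set (EuclideanSpace ℝ (Fin n)))
    (hCne : C.Nonempty) (hCclosed : IsClosed C) (hCconvex : Convex ℝ C)
    (proj : EuclideanSpace ℝ (Fin n) → EuclideanSpace ℝ (Fin n))
    (hproj_mem : ∀ u, proj u ∈ C)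
    (hproj_min : ∀ u, ∀ w ∈ C, ‖u - proj u‖ ≤ ‖u - w‖)
    (f : EuclideanSpace ℝ (Fin n) → ℝ) (f' : EuclideanSpace ℝ (Fin n) → EuclideanSpace ℝ (Fin n))
    (hgrad : ∀ x, HasGradientAt f (f' x) x)
    (hconv : ConvexOn ℝ Set.univ f)
    (L : ℝ) (hL : 0 < L)
    (hlip : ∀ x ∈ C, ∀ y ∈ C, ‖f' x - f' y‖ ≤ L * ‖x - y‖)
    (xs : EuclideanSpace ℝ (Fin n)) (hxsC : xs ∈ C) (hxsmin : ∀ u ∈ C, f xs ≤ f u)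
    (x : EuclideanSpace ℝ (Fin n)) (hxC : x ∈ C) (η : ℝ) (hη : 0 < η) :
    ‖η • (x - proj (x - (1 / η) • f' x))‖ ^ 2 ≤ 2 * max η L * (f x - f xs) :=
  gradient_mapping_sq_le_primal_gap_general C hCconvex proj hproj_mem hproj_min f f' hgrad L hlip xs
    hxsmin x hxC η hη
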